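/- Fix α, β ∈ (0,1) with β ≠ α, and let m_β(r) = β for 0 < r < 1/2 and m_β(r) = α for r ≥ 1/2. Then (i) the supremum over G ∈ C¹_K((0,1/2)) of { −∫₀^{1/2} G'(r) m_β(r) dr − ∫₀^{1/2} σ(m_β(r)) G(r)² dr } equals 0, while (ii) the supremum over G ∈ C¹_K((0,∞)) of { −∫₀^∞ G'(r) m_β(r) dr − ∫₀^∞ σ(m_β(r)) G(r)² dr } equals +∞; in particular the step density m_β has infinite energy Q(m_β(r)dr) = +∞. -/

import Mathlib

open MeasureTheory Set Filter
open scoped ENNReal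

noncomputable section

/-- `G` is continuously differentiable with compact support contained in `(0, ∞)`. -/
def IsC1K (G : ℝ → ℝ) : Prop :=
  ContDiff ℝ 1 G ∧ HasCompactSupport G ∧ tsupport G ⊆ Set.Ioi 0

/-- `G` is continuously differentiable with compact support contained in `(0, 1/2)`. -/
def IsC1KHalf (G : ℝ → ℝ) : Prop :=
  ContDiff ℝ 1 G ∧ HasCompactSupport G ∧ tsupport G ⊆ Set.Ioo 0 (1/2)

/-- The expression inside the supremum defining the energy. -/
def energyExpr (m G : ℝ → ℝ) : ℝ :=
  (- ∫ r in Set.Ioi (0:ℝ), deriv G r * m r)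
    - ∫ r in Set.Ioi (0:ℝ), (m r * (1 - m r)) * (G r) ^ 2

/-- The energy functional `Q(m(r)dr)`, with values in `ℝ≥0∞`. -/
def energy (m : ℝ → ℝ) : ℝ≥0∞ :=
  ⨆ G : {G : ℝ → ℝ // IsC1K G}, ENNReal.ofReal (energyExpr m G.1)

/-- The step density `m_β`: equal to `β` on `(0,1/2)` and to `α` on `[1/2,∞)`. -/
def mBeta (α β : ℝ) : ℝ → ℝ := fun r => if r < 1/2 then β else α

/-! On `(0, 1/2)` the density is the constant `β`, so `∫ G' m_β` vanishes for `G` supported there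
and what remains, `-∫ σ(β) G²`, is nonpositive.

On `(0, ∞)`, integrating `G'` against the step gives `-∫ G' m_β = (α - β) G(1/2)`, while
`σ ≤ 1/4` bounds the quadratic term. A bump of height `c` and width `2r` around `1/2` therefore
has energy at least `c (α - β) - c² r / 2`, which equals `(α - β)² / (2r)` for `c = (α - β) / r`
and is unbounded as `r → 0`. -/

theorem ContDiff.integral_Ioo_deriv {G : ℝ → ℝ} (hG : ContDiff ℝ 1 G) {a b : ℝ} (hab : a ≤ b) :
    ∫ x in Ioo a b, deriv G x = G b - G a := by
  rw [← integral_Ioc_eq_integral_Ioo, ← intervalIntegral.integral_of_le hab]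
  exact intervalIntegral.integral_deriv_eq_sub
    (fun x _ => (hG.differentiable one_ne_zero).differentiableAt)
    ((hG.continuous_deriv le_rfl).intervalIntegrable _ _)

theorem ContDiff.integral_Ici_deriv_of_hasCompactSupport {G : ℝ → ℝ} (hG : ContDiff ℝ 1 G)
    (hc : HasCompactSupport G) (a : ℝ) : ∫ x in Ici a, deriv G x = -G a := by
  rw [integral_Ici_eq_integral_Ioi, integral_Ioi_of_hasDerivAt_of_tendsto' (m := 0)
    (fun x _ => (hG.differentiable one_ne_zero x).hasDerivAt)
    ((hG.continuous_deriv le_rfl).integrable_of_hasCompactSupport hc.deriv).integrableOn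
    (hc.is_zero_at_infty.mono_left atTop_le_cocompact), zero_sub]

theorem mul_one_sub_le_one_div_four (t : ℝ) : t * (1 - t) ≤ 1 / 4 := by
  nlinarith [sq_nonneg (t - 1 / 2)]

theorem ContDiffBump.integral_sq_le {x₀ : ℝ} (φ : ContDiffBump x₀) :
    ∫ x, φ x ^ 2 ≤ 2 * φ.rOut := by
  have hzero : ∀ x ∉ Metric.closedBall x₀ φ.rOut, φ x ^ 2 = 0 := fun x hx => by
    rw [image_eq_zero_of_notMem_tsupport (by rwa [φ.tsupport_eq] : x ∉ tsupport φ),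
      zero_pow two_ne_zero]
  have hle : ∀ x ∈ Metric.closedBall x₀ φ.rOut, ‖φ x ^ 2‖ ≤ 1 := fun x _ => by
    rw [norm_pow, Real.norm_of_nonneg φ.nonneg]
    exact pow_le_one₀ φ.nonneg φ.le_one
  calc ∫ x, φ x ^ 2 = ∫ x in Metric.closedBall x₀ φ.rOut, φ x ^ 2 :=
        (setIntegral_eq_integral_of_forall_compl_eq_zero hzero).symm
    _ ≤ 1 * volume.real (Metric.closedBall x₀ φ.rOut) :=
        (le_abs_self _).trans (norm_setIntegral_le_of_norm_le_const measure_closedBall_lt_top hle)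
    _ = 2 * φ.rOut := by rw [one_mul, Real.volume_real_closedBall φ.rOut_pos.le]

section mBeta

variable {α β r : ℝ}

theorem mBeta_of_lt (hr : r < 1 / 2) : mBeta α β r = β := if_pos hr

theorem mBeta_of_le (hr : 1 / 2 ≤ r) : mBeta α β r = α := if_neg hr.not_gt

theorem mBeta_mul_one_sub :
    mBeta α β r * (1 - mBeta α β r) = mBeta (α * (1 - α)) (β * (1 - β)) r :=
  apply_ite (fun t => t * (1 - t)) _ _ _

theorem norm_mBeta_le : ‖mBeta α β r‖ ≤ max ‖α‖ ‖β‖ := by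
  unfold mBeta
  split_ifs
  exacts [le_max_right _ _, le_max_left _ _]

theorem measurable_mBeta (α β : ℝ) : Measurable (mBeta α β) :=
  Measurable.ite measurableSet_Iio measurable_const measurable_const

theorem MeasureTheory.Integrable.mBeta_mul {μ : Measure ℝ} {g : ℝ → ℝ} (hg : Integrable g μ)
    (α β : ℝ) : Integrable (fun r => mBeta α β r * g r) μ :=
  hg.bdd_mul (measurable_mBeta α β).aestronglyMeasurable (ae_of_all _ fun _ => norm_mBeta_le)

end mBeta

theorem IsC1KHalf.integral_deriv_mul_mBeta {G : ℝ → ℝ} (hG : IsC1KHalf G) (α β : ℝ) :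
    ∫ r in Ioo (0:ℝ) (1/2), deriv G r * mBeta α β r = 0 := by
  have hG₀ : G 0 = 0 := image_eq_zero_of_notMem_tsupport fun h => lt_irrefl (0:ℝ) (hG.2.2 h).1
  have hG_half : G (1/2) = 0 :=
    image_eq_zero_of_notMem_tsupport fun h => lt_irrefl (1/2:ℝ) (hG.2.2 h).2
  rw [setIntegral_congr_fun measurableSet_Ioo fun r hr => congrArg (deriv G r * ·)
      (mBeta_of_lt hr.2), integral_mul_const, hG.1.integral_Ioo_deriv (by norm_num), hG₀,
    hG_half, sub_zero, zero_mul]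

theorem IsC1K.apply_zero {G : ℝ → ℝ} (hG : IsC1K G) : G 0 = 0 :=
  image_eq_zero_of_notMem_tsupport fun h => lt_irrefl (0:ℝ) (hG.2.2 h)

theorem IsC1K.neg_integral_deriv_mul_mBeta {G : ℝ → ℝ} (hG : IsC1K G) (α β : ℝ) :
    -∫ r in Ioi (0:ℝ), deriv G r * mBeta α β r = (α - β) * G (1/2) := by
  have hint : Integrable fun r => deriv G r * mBeta α β r := by
    simpa only [mul_comm] using
      ((hG.1.continuous_deriv le_rfl).integrable_of_hasCompactSupport hG.2.1.deriv).mBeta_mul α β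
  have hlow : ∫ r in Ioo 0 (1/2), deriv G r * mBeta α β r = β * G (1/2) := by
    rw [setIntegral_congr_fun measurableSet_Ioo fun r hr => congrArg (deriv G r * ·)
        (mBeta_of_lt hr.2), integral_mul_const, hG.1.integral_Ioo_deriv (by norm_num),
      hG.apply_zero, sub_zero, mul_comm]
  have hhigh : ∫ r in Ici (1/2), deriv G r * mBeta α β r = -α * G (1/2) := by
    rw [setIntegral_congr_fun measurableSet_Ici fun r hr => congrArg (deriv G r * ·)
        (mBeta_of_le hr), integral_mul_const,
      hG.1.integral_Ici_deriv_of_hasCompactSupport hG.2.1]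
    ring
  rw [← Ioo_union_Ici_eq_Ioi (by norm_num : (0:ℝ) < 1/2),
    setIntegral_union ((Iio_disjoint_Ici le_rfl).mono_left Ioo_subset_Iio_self)
      measurableSet_Ici hint.integrableOn hint.integrableOn, hlow, hhigh]
  ring

theorem isC1K_const_mul_bump {x₀ : ℝ} (φ : ContDiffBump x₀) (hφ : φ.rOut < x₀) (c : ℝ) :
    IsC1K fun x => c * φ x := by
  refine ⟨contDiff_const.mul φ.contDiff, φ.hasCompactSupport.mul_left,
    (tsupport_mul_subset_right).trans fun x hx => ?_⟩
  rw [φ.tsupport_eq, Real.closedBall_eq_Icc] at hx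
  exact (sub_pos.2 hφ).trans_le hx.1

theorem energyExpr_mBeta_const_mul_bump_ge (α β c : ℝ) (φ : ContDiffBump (1/2 : ℝ))
    (hφ : φ.rOut < 1/2) :
    c * (α - β) - c ^ 2 * φ.rOut / 2 ≤ energyExpr (mBeta α β) fun x => c * φ x := by
  have hG := isC1K_const_mul_bump φ hφ c
  have hG2_supp : HasCompactSupport fun x => (c * φ x) ^ 2 :=
    hG.2.1.comp_left (g := fun t : ℝ => t ^ 2) (zero_pow two_ne_zero)
  have hG2 : Integrable fun x => (c * φ x) ^ 2 :=
    (hG.1.continuous.pow 2).integrable_of_hasCompactSupport hG2_supp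
  have hσ : ∫ r in Ioi (0:ℝ), (mBeta α β r * (1 - mBeta α β r)) * (c * φ r) ^ 2
      ≤ c ^ 2 * φ.rOut / 2 := calc
    _ ≤ ∫ r in Ioi (0:ℝ), 1 / 4 * (c * φ r) ^ 2 := by
        refine setIntegral_mono_on ?_ (hG2.const_mul _).integrableOn measurableSet_Ioi
          fun r _ => mul_le_mul_of_nonneg_right (mul_one_sub_le_one_div_four _) (sq_nonneg _)
        simp only [mBeta_mul_one_sub]
        exact (hG2.mBeta_mul _ _).integrableOn
    _ ≤ ∫ r, 1 / 4 * (c * φ r) ^ 2 :=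
        setIntegral_le_integral (hG2.const_mul _) (ae_of_all _ fun r => by positivity)
    _ = c ^ 2 / 4 * ∫ r, φ r ^ 2 := by
        simp_rw [mul_pow, ← mul_assoc]
        rw [integral_const_mul]
        ring_nf
    _ ≤ c ^ 2 * φ.rOut / 2 := by
        nlinarith [φ.integral_sq_le, sq_nonneg c]
  have hφ_half : φ (1/2) = 1 := φ.one_of_mem_closedBall (Metric.mem_closedBall_self φ.rIn_pos.le)
  rw [energyExpr, hG.neg_integral_deriv_mul_mBeta, hφ_half, mul_one]
  linarith

theorem energy_eq_top_of_forall_lt {m : ℝ → ℝ} (h : ∀ M : ℝ, ∃ G, IsC1K G ∧ M < energyExpr m G) :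
    energy m = ⊤ := by
  refine iSup_eq_top.2 fun b hb => ?_
  obtain ⟨G, hG, hbG⟩ := h b.toReal
  exact ⟨⟨G, hG⟩, (ENNReal.lt_ofReal_iff_toReal_lt hb.ne).2 hbG⟩

theorem exists_energyExpr_mBeta_gt {α β : ℝ} (hne : β ≠ α) (M : ℝ) :
    ∃ G, IsC1K G ∧ M < energyExpr (mBeta α β) G := by
  have hd : 0 < (α - β) ^ 2 / 2 := by
    have := sub_ne_zero.2 hne.symm
    positivity
  obtain ⟨r, hMr, hr⟩ := (((tendsto_inv_nhdsGT_zero.const_mul_atTop hd).eventually_gt_atTop M).and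
    (Ioo_mem_nhdsGT (by norm_num : (0:ℝ) < 1/2))).exists
  let φ : ContDiffBump (1/2 : ℝ) := ⟨r / 2, r, half_pos hr.1, half_lt_self hr.1⟩
  have hbound := energyExpr_mBeta_const_mul_bump_ge α β ((α - β) / r) φ hr.2
  refine ⟨_, isC1K_const_mul_bump φ hr.2 _, hMr.trans_le (le_of_eq_of_le ?_ hbound)⟩
  have hr0 := hr.1.ne'
  field_simp
  ring

theorem stmt4_general (α β : ℝ) (hβ : β ∈ Set.Ioo (0:ℝ) 1)
    (hne : β ≠ α) :
    (⨆ G : {G : ℝ → ℝ // IsC1KHalf G}, ENNReal.ofReal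
        ((- ∫ r in Set.Ioo (0:ℝ) (1/2), deriv G.1 r * mBeta α β r)
          - ∫ r in Set.Ioo (0:ℝ) (1/2),
              (mBeta α β r * (1 - mBeta α β r)) * (G.1 r) ^ 2)) = 0 ∧
    energy (mBeta α β) = ⊤ := by
  refine ⟨ENNReal.iSup_eq_zero.2 fun G => ENNReal.ofReal_eq_zero.2 ?_,
    energy_eq_top_of_forall_lt (exists_energyExpr_mBeta_gt hne)⟩
  rw [G.2.integral_deriv_mul_mBeta, neg_zero, zero_sub, neg_nonpos]
  refine setIntegral_nonneg measurableSet_Ioo fun r hr => ?_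
  rw [mBeta_of_lt hr.2]
  exact mul_nonneg (mul_nonneg hβ.1.le (sub_nonneg.2 hβ.2.le)) (sq_nonneg _)

/-- For the step density `m_β` with `β ≠ α`, the supremum of the energy expression over
`C¹_K((0,1/2))` (with integrals over `(0,1/2)`) vanishes, while the energy over
`C¹_K((0,∞))` is infinite: `Q(m_β(r)dr) = +∞`. -/
theorem stmt4 (α β : ℝ) (hα : α ∈ Set.Ioo (0:ℝ) 1) (hβ : β ∈ Set.Ioo (0:ℝ) 1)
    (hne : β ≠ α) :
    (⨆ G : {G : ℝ → ℝ // IsC1KHalf G}, ENNReal.ofReal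
        ((- ∫ r in Set.Ioo (0:ℝ) (1/2), deriv G.1 r * mBeta α β r)
          - ∫ r in Set.Ioo (0:ℝ) (1/2),
              (mBeta α β r * (1 - mBeta α β r)) * (G.1 r) ^ 2)) = 0 ∧
    energy (mBeta α β) = ⊤ :=
  stmt4_general α β hβ hne
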